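/- arXiv:2108.06354 — 6 statements merged into one kernel-verified Lean document; each statement's English description precedes it below -/
import Mathlib

section
/- Let α, β ∈ (0,1], let k > 0 be a real number with k − β > 0 and k − β − α + 1 > 0, and let t > 0. Applying the GFD of order β with parameter k to f(x) = x^k gives g(x) = (Γ(k+1)/Γ(k−β+1))·x^(k−β); then applying the GFD of order α with parameter k − β to g gives (Γ(k−β)/Γ(k−β−α+1))·t^(1−α)·g′(t) = (Γ(k+1)/Γ(k−β−α+1))·t^(k−β−α), which equals the GFD of order α+β of x^k at t, namely (Γ(k)/Γ(k−α−β+1))·t^(1−α−β)·(k·t^(k−1)) = (Γ(k+1)/Γ(k−β−α+1))·t^(k−β−α). Hence D^α D^β t^k = D^(α+β) t^k. -/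
/-!
Both sides reduce to the single identity
`Γ(κ)/Γ(κ-γ+1) · t^(1-γ) · κ t^(κ-1) = Γ(κ+1)/Γ(κ-γ+1) · t^(κ-γ)`, i.e. `κ Γ(κ) = Γ(κ+1)`
together with `t^(1-γ) t^(κ-1) = t^(κ-γ)`. For `D^α D^β` it is applied with `κ = k - β`, `γ = α`,
after which the constant `Γ(k+1)/Γ(k-β+1)` from the inner derivative cancels `Γ(k-β+1)`;
for `D^(α+β)` with `κ = k`, `γ = α + β`.
-/

open Real

noncomputable def gfd (γ μ : ℝ) (f : ℝ → ℝ) (t : ℝ) : ℝ :=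
  Gamma μ / Gamma (μ - γ + 1) * t ^ (1 - γ) * deriv f t

theorem gfd_const_mul (γ μ c : ℝ) (f : ℝ → ℝ) (t : ℝ) :
    gfd γ μ (fun x => c * f x) t = c * gfd γ μ f t := by
  simp only [gfd, deriv_const_mul_field']
  ring

theorem Gamma_div_mul_rpow_mul_deriv_rpow (γ : ℝ) {κ t : ℝ} (hκ : κ ≠ 0) (ht : 0 < t) :
    Gamma κ / Gamma (κ - γ + 1) * t ^ (1 - γ) * (κ * t ^ (κ - 1))
      = Gamma (κ + 1) / Gamma (κ - γ + 1) * t ^ (κ - γ) := by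
  have hpow : t ^ (1 - γ) * t ^ (κ - 1) = t ^ (κ - γ) := by
    rw [← rpow_add ht]
    ring_nf
  rw [Gamma_add_one hκ, ← hpow]
  ring

theorem gfd_rpow (γ : ℝ) {κ t : ℝ} (hκ : κ ≠ 0) (ht : 0 < t) :
    gfd γ κ (fun x => x ^ κ) t = Gamma (κ + 1) / Gamma (κ - γ + 1) * t ^ (κ - γ) := by
  rw [gfd, Real.deriv_rpow_const, Gamma_div_mul_rpow_mul_deriv_rpow γ hκ ht]

theorem gfd_semigroup_rpow_general (α β k t : ℝ) (hk : 0 < k) (hkβ : k - β > 0) (ht : 0 < t) :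
    Real.Gamma (k - β) / Real.Gamma (k - β - α + 1) * t ^ (1 - α) *
        deriv (fun x : ℝ => Real.Gamma (k + 1) / Real.Gamma (k - β + 1) * x ^ (k - β)) t
      = Real.Gamma (k + 1) / Real.Gamma (k - β - α + 1) * t ^ (k - β - α) ∧
    Real.Gamma k / Real.Gamma (k - α - β + 1) * t ^ (1 - α - β) * (k * t ^ (k - 1))
      = Real.Gamma (k + 1) / Real.Gamma (k - β - α + 1) * t ^ (k - β - α) := by
  constructor
  · have hΓ : Gamma (k - β + 1) ≠ 0 := (Gamma_pos_of_pos (by linarith)).ne'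
    change gfd α (k - β) _ t = _
    rw [gfd_const_mul, gfd_rpow α hkβ.ne' ht, ← mul_assoc, div_mul_div_cancel₀ hΓ]
  · convert Gamma_div_mul_rpow_mul_deriv_rpow (α + β) hk.ne' ht using 3 <;> ring_nf

/-- Semigroup property of the GFD on power functions: applying the GFD of order `β`
(with parameter `k`) to `x ↦ x^k` gives `g x = (Γ(k+1)/Γ(k-β+1))·x^(k-β)`; applying the
GFD of order `α` (with parameter `k-β`) to `g` at `t` gives
`(Γ(k-β)/Γ(k-β-α+1))·t^(1-α)·g'(t) = (Γ(k+1)/Γ(k-β-α+1))·t^(k-β-α)`, which equals the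
GFD of order `α+β` of `x^k` at `t`, namely `(Γ(k)/Γ(k-α-β+1))·t^(1-α-β)·(k·t^(k-1))`.
Hence `D^α D^β t^k = D^(α+β) t^k`. -/
theorem gfd_semigroup_rpow (α β k t : ℝ) (hα : 0 < α) (hα1 : α ≤ 1)
    (hβ : 0 < β) (hβ1 : β ≤ 1) (hk : 0 < k) (hkβ : k - β > 0)
    (hkβα : k - β - α + 1 > 0) (ht : 0 < t) :
    Real.Gamma (k - β) / Real.Gamma (k - β - α + 1) * t ^ (1 - α) *
        deriv (fun x : ℝ => Real.Gamma (k + 1) / Real.Gamma (k - β + 1) * x ^ (k - β)) t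
      = Real.Gamma (k + 1) / Real.Gamma (k - β - α + 1) * t ^ (k - β - α) ∧
    Real.Gamma k / Real.Gamma (k - α - β + 1) * t ^ (1 - α - β) * (k * t ^ (k - 1))
      = Real.Gamma (k + 1) / Real.Gamma (k - β - α + 1) * t ^ (k - β - α) :=
  gfd_semigroup_rpow_general α β k t hk hkβ ht
end

section
/- (Mean value theorem for the GFD.) Let 0 < a < b, let α ∈ (0,1), let β > 0 with β − α + 1 > 0, and let f : ℝ → ℝ be continuous on [a,b] and differentiable on (a,b). Then there exists c ∈ (a,b) such that the GFD of f at c satisfies (Γ(β)/Γ(β−α+1))·c^(1−α)·f′(c) = (f(b) − f(a)) / (h·(b^α − a^α)), where h = Γ(β−α+1)/(α·Γ(β)); equivalently, c^(1−α)·f′(c) = α·(f(b) − f(a))/(b^α − a^α). -/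
open Real Set

/-- Mean value theorem for the generalized fractional derivative: if `f` is continuous
on `[a,b]` and differentiable on `(a,b)` with `0 < a < b`, then there is `c ∈ (a,b)` with
`(Γ(β)/Γ(β-α+1))·c^(1-α)·f'(c) = (f b − f a)/(h·(b^α − a^α))` where
`h = Γ(β-α+1)/(α·Γ(β))`; equivalently `c^(1-α)·f'(c) = α·(f b − f a)/(b^α − a^α)`. -/
theorem gfd_mvt (a b α β : ℝ) (ha : 0 < a) (hab : a < b)
    (hα : 0 < α) (hα1 : α < 1) (hβ : 0 < β) (hβα : β - α + 1 > 0)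
    (f : ℝ → ℝ) (hfc : ContinuousOn f (Icc a b))
    (hfd : DifferentiableOn ℝ f (Ioo a b)) :
    ∃ c ∈ Ioo a b,
      Real.Gamma β / Real.Gamma (β - α + 1) * c ^ (1 - α) * deriv f c
        = (f b - f a) /
            (Real.Gamma (β - α + 1) / (α * Real.Gamma β) * (b ^ α - a ^ α)) ∧
      c ^ (1 - α) * deriv f c = α * (f b - f a) / (b ^ α - a ^ α) := by
  set g : ℝ → ℝ := fun x => x ^ α with hg
  have hgc : ContinuousOn g (Icc a b) := fun x _ =>
    (Real.continuousAt_rpow_const x α (Or.inr hα.le)).continuousWithinAt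
  have hgd : DifferentiableOn ℝ g (Ioo a b) := fun x hx =>
    ((Real.hasDerivAt_rpow_const (p := α) (Or.inl (lt_trans ha hx.1).ne')).differentiableAt).differentiableWithinAt
  obtain ⟨c, hc, heq⟩ := exists_ratio_deriv_eq_ratio_slope f hab hfc hfd g hgc hgd
  have hc0 : 0 < c := lt_trans ha hc.1
  have hdg : deriv g c = α * c ^ (α - 1) :=
    (Real.hasDerivAt_rpow_const (p := α) (Or.inl hc0.ne')).deriv
  have hba : g b - g a > 0 := sub_pos.2 (Real.rpow_lt_rpow ha.le hab hα)
  have hkey : c ^ (1 - α) * deriv f c = α * (f b - f a) / (b ^ α - a ^ α) := by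
    rw [hdg] at heq
    have hcpow : c ^ (1 - α) * c ^ (α - 1) = 1 := by
      rw [← Real.rpow_add hc0]; norm_num
    have h1 : c ^ (1 - α) * ((g b - g a) * deriv f c)
        = c ^ (1 - α) * (f b - f a) * (α * c ^ (α - 1)) := by rw [heq]; ring
    have hgb : g b = b ^ α := rfl
    have hga : g a = a ^ α := rfl
    rw [hgb, hga] at h1 hba
    rw [eq_div_iff hba.ne']
    linear_combination h1 + α * (f b - f a) * hcpow
  refine ⟨c, hc, ?_, hkey⟩
  have hΓ1 : 0 < Real.Gamma β := Real.Gamma_pos_of_pos hβ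
  have hΓ2 : 0 < Real.Gamma (β - α + 1) := Real.Gamma_pos_of_pos hβα
  rw [mul_assoc, hkey]
  rw [show g b = b ^ α from rfl, show g a = a ^ α from rfl] at hba
  field_simp
end

section
/- Let k ∈ ℝ, let β > 0, and set A = Γ(β)/Γ(β+1/2). The function y : [0,∞) → ℝ defined by y(x) = (1/A)·Σ_{n=0}^∞ (k^n / ((n + 1/2)·n!))·x^(n+1/2) (the series converges for every x ≥ 0) satisfies y(0) = 0 and, for every x > 0, solves the GFD differential equation of order 1/2: A·x^(1/2)·y′(x) = e^{kx}. -/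
/-!
Differentiating termwise, `k ^ n x ^ (n + 1/2) / ((n + 1/2) n!)` has derivative
`(k x) ^ n / n! / x ^ (1/2)`, so the series differentiates to `exp (k x) / x ^ (1/2)`.
Termwise differentiation is justified on `(x/2, 2x)`, where these derivatives are dominated by
`(2|k|x) ^ n / n! / (x/2) ^ (1/2)`. Since `A > 0`, the factors `A` and `1 / A` cancel.
-/

open Real
open scoped Nat

noncomputable def gfdExpTerm (k : ℝ) (n : ℕ) (x : ℝ) : ℝ :=
  k ^ n / (((n : ℝ) + 1 / 2) * (n ! : ℝ)) * x ^ ((n : ℝ) + 1 / 2)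

section
variable (k : ℝ)

lemma norm_gfdExpTerm_le (n : ℕ) (x : ℝ) :
    ‖gfdExpTerm k n x‖ ≤ 2 * |x| ^ (1 / 2 : ℝ) * ((|k| * |x|) ^ n / n !) := by
  have hn : (1 / 2 : ℝ) ≤ n + 1 / 2 := by linarith [(n.cast_nonneg : (0 : ℝ) ≤ n)]
  have hsplit : |x| ^ ((n : ℝ) + 1 / 2) = |x| ^ n * |x| ^ (1 / 2 : ℝ) := by
    rw [rpow_add' (abs_nonneg x) (by positivity), rpow_natCast]
  calc ‖gfdExpTerm k n x‖
      ≤ |k| ^ n / ((n + 1 / 2) * n !) * |x| ^ ((n : ℝ) + 1 / 2) := by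
        rw [gfdExpTerm, norm_mul, norm_div, norm_mul, norm_pow, Real.norm_eq_abs,
          Real.norm_of_nonneg (by positivity : (0 : ℝ) ≤ n + 1 / 2), Real.norm_natCast]
        gcongr
        exact abs_rpow_le_abs_rpow x _
    _ ≤ |k| ^ n / (1 / 2 * n !) * |x| ^ ((n : ℝ) + 1 / 2) := by gcongr
    _ = 2 * |x| ^ (1 / 2 : ℝ) * ((|k| * |x|) ^ n / n !) := by
        rw [hsplit, mul_pow]; field_simp

lemma summable_gfdExpTerm (x : ℝ) : Summable (fun n => gfdExpTerm k n x) :=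
  .of_norm_bounded ((summable_pow_div_factorial (|k| * |x|)).mul_left _)
    (norm_gfdExpTerm_le k · x)

lemma gfdExpTerm_zero_right (n : ℕ) : gfdExpTerm k n 0 = 0 := by
  rw [gfdExpTerm, zero_rpow (by positivity), mul_zero]

lemma hasDerivAt_gfdExpTerm {x : ℝ} (hx : 0 < x) (n : ℕ) :
    HasDerivAt (gfdExpTerm k n) ((k * x) ^ n / n ! / x ^ (1 / 2 : ℝ)) x := by
  refine ((hasDerivAt_rpow_const (p := (n : ℝ) + 1 / 2) (Or.inl hx.ne')).const_mul
    (k ^ n / (((n : ℝ) + 1 / 2) * (n ! : ℝ)))).congr_deriv ?_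
  rw [show (n : ℝ) + 1 / 2 - 1 = n - 1 / 2 by ring, rpow_sub hx, rpow_natCast, mul_pow]
  field_simp

lemma hasDerivAt_tsum_gfdExpTerm {x : ℝ} (hx : 0 < x) :
    HasDerivAt (fun t => ∑' n, gfdExpTerm k n t) (exp (k * x) / x ^ (1 / 2 : ℝ)) x := by
  have hmem : x ∈ Set.Ioo (x / 2) (2 * x) := ⟨by linarith, by linarith⟩
  have hbound : ∀ n (t : ℝ), t ∈ Set.Ioo (x / 2) (2 * x) →
      ‖(k * t) ^ n / n ! / t ^ (1 / 2 : ℝ)‖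
        ≤ (|k| * (2 * x)) ^ n / n ! / (x / 2) ^ (1 / 2 : ℝ) := by
    rintro n t ⟨hlo, hhi⟩
    have ht : 0 < t := by linarith
    rw [norm_div, norm_div, Real.norm_natCast, norm_pow, norm_mul, Real.norm_of_nonneg ht.le,
      Real.norm_of_nonneg (rpow_nonneg ht.le _), Real.norm_eq_abs]
    gcongr
  have hderiv := hasDerivAt_tsum_of_isPreconnected
    ((summable_pow_div_factorial _).div_const _) isOpen_Ioo isPreconnected_Ioo
    (fun n t ht => hasDerivAt_gfdExpTerm k (by linarith [ht.1]) n) hbound hmem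
    (summable_gfdExpTerm k x) hmem
  have hexp : HasSum (fun n => (k * x) ^ n / n !) (exp (k * x)) := by
    simpa only [← exp_eq_exp_ℝ] using NormedSpace.expSeries_div_hasSum_exp (k * x)
  rwa [(hexp.div_const _).tsum_eq] at hderiv

end

/-- The series solution `y(x) = (1/A)·Σ_{n=0}^∞ (k^n/((n+1/2)·n!))·x^(n+1/2)`, with
`A = Γ(β)/Γ(β+1/2)`, converges for every `x ≥ 0`, satisfies `y 0 = 0`, and solves the
GFD equation of order `1/2`: `A·x^(1/2)·y′(x) = e^{kx}` for all `x > 0`. -/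
theorem gfd_ode_exp (β k : ℝ) (hβ : 0 < β) (A : ℝ)
    (hA : A = Real.Gamma β / Real.Gamma (β + 1 / 2)) (y : ℝ → ℝ)
    (hy : ∀ x : ℝ, y x =
      (1 / A) * ∑' n : ℕ,
        k ^ n / (((n : ℝ) + 1 / 2) * (Nat.factorial n : ℝ)) * x ^ ((n : ℝ) + 1 / 2)) :
    (∀ x : ℝ, 0 ≤ x →
      Summable (fun n : ℕ =>
        k ^ n / (((n : ℝ) + 1 / 2) * (Nat.factorial n : ℝ)) * x ^ ((n : ℝ) + 1 / 2))) ∧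
    y 0 = 0 ∧
    ∀ x : ℝ, 0 < x → A * x ^ ((1 : ℝ) / 2) * deriv y x = Real.exp (k * x) := by
  have hA0 : A ≠ 0 := by
    rw [hA]
    exact (div_pos (Gamma_pos_of_pos hβ) (Gamma_pos_of_pos (by linarith))).ne'
  have hy' : y = fun x => (1 / A) * ∑' n, gfdExpTerm k n x := funext hy
  refine ⟨fun x _ => summable_gfdExpTerm k x, ?_, fun x hx => ?_⟩
  · simp [hy', gfdExpTerm_zero_right]
  · rw [hy', ((hasDerivAt_tsum_gfdExpTerm k hx).const_mul (1 / A)).deriv]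
    field_simp
end

section
/- Let β > 0 and set A = Γ(β)/Γ(β+1/4). The function y : [0,∞) → ℝ defined by y(x) = (e^{8x^{3/4}/(3A)} − 1)/(e^{8x^{3/4}/(3A)} + 1) satisfies y(0) = 0 and, for every x > 0, solves the Riccati fractional differential equation in the GFD sense of order α = 3/4: A·x^(1/4)·y′(x) + y(x)^2 = 1. -/
/-!
The given function is `y x = tanh (x ^ (3/4) / ((3/4) A))`. Since `tanh' = 1 - tanh ²`, the chain
rule gives `y' = (1 - y²) · x ^ (-1/4) / A`, and the factor `A x ^ (1/4)` of the generalized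
fractional derivative cancels exactly the inner derivative. The same works for every order `α`
with `tanh (x ^ α / (α A))`.
-/

open Real

theorem Real.hasDerivAt_tanh (x : ℝ) : HasDerivAt tanh (1 - tanh x ^ 2) x := by
  have hcosh : cosh x ≠ 0 := (cosh_pos x).ne'
  have hquot := (hasDerivAt_sinh x).div (hasDerivAt_cosh x) hcosh
  have htanh : sinh / cosh = tanh := funext fun t => (tanh_eq_sinh_div_cosh t).symm
  rw [htanh] at hquot
  refine hquot.congr_deriv ?_
  rw [tanh_eq_sinh_div_cosh]
  field_simp

theorem Real.tanh_eq_exp_two_mul (u : ℝ) : tanh u = (exp (2 * u) - 1) / (exp (2 * u) + 1) := by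
  have hexp : exp (2 * u) = exp u * exp u := by rw [two_mul, exp_add]
  rw [tanh_eq, hexp, exp_neg]
  have hu : exp u ≠ 0 := (exp_pos u).ne'
  field_simp

theorem tanh_rpow_div_solves_riccati {α A x : ℝ} (hα : α ≠ 0) (hA : A ≠ 0) (hx : 0 < x) :
    A * x ^ (1 - α) * deriv (fun t => tanh (t ^ α / (α * A))) x
      + tanh (x ^ α / (α * A)) ^ 2 = 1 := by
  have hinner : HasDerivAt (fun t => t ^ α / (α * A)) (α * x ^ (α - 1) / (α * A)) x :=
    (hasDerivAt_rpow_const (Or.inl hx.ne')).div_const _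
  have hder : HasDerivAt (fun t => tanh (t ^ α / (α * A)))
      ((1 - tanh (x ^ α / (α * A)) ^ 2) * (α * x ^ (α - 1) / (α * A))) x :=
    (hasDerivAt_tanh _).comp x hinner
  rw [hder.deriv]
  have hpow : x ^ (1 - α) * x ^ (α - 1) = 1 := by
    rw [← rpow_add hx, show 1 - α + (α - 1) = 0 by ring, rpow_zero]
  set T := tanh (x ^ α / (α * A))
  field_simp
  linear_combination (1 - T ^ 2) * hpow

/-- `y(x) = (e^{8x^{3/4}/(3A)} − 1)/(e^{8x^{3/4}/(3A)} + 1)`, with `A = Γ(β)/Γ(β+1/4)`,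
satisfies `y 0 = 0` and solves the Riccati fractional differential equation in the GFD
sense of order `3/4`: `A·x^(1/4)·y′(x) + y(x)² = 1` for all `x > 0`. -/
theorem gfd_riccati_three_quarters (β : ℝ) (hβ : 0 < β) (A : ℝ)
    (hA : A = Real.Gamma β / Real.Gamma (β + 1 / 4)) (y : ℝ → ℝ)
    (hy : ∀ x : ℝ, y x =
      (Real.exp (8 * x ^ ((3 : ℝ) / 4) / (3 * A)) - 1) /
      (Real.exp (8 * x ^ ((3 : ℝ) / 4) / (3 * A)) + 1)) :
    y 0 = 0 ∧
    ∀ x : ℝ, 0 < x → A * x ^ ((1 : ℝ) / 4) * deriv y x + (y x) ^ 2 = 1 := by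
  have hA0 : A ≠ 0 := by
    rw [hA]
    exact (div_pos (Gamma_pos_of_pos hβ) (Gamma_pos_of_pos (by linarith))).ne'
  have hy_tanh : y = fun x => tanh (x ^ ((3 : ℝ) / 4) / ((3 / 4) * A)) := by
    funext x
    rw [hy, tanh_eq_exp_two_mul]
    congr 3 <;> field_simp <;> ring
  subst hy_tanh
  refine ⟨by simp [zero_rpow (by norm_num : (3 : ℝ) / 4 ≠ 0)], fun x hx => ?_⟩
  have h := tanh_rpow_div_solves_riccati (by norm_num : (3 : ℝ) / 4 ≠ 0) hA0 hx
  rwa [show (1 : ℝ) - 3 / 4 = 1 / 4 by norm_num] at h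
end

section
/- Let β > 0 and set A = Γ(β)/Γ(β+1/10). The function y : [0,∞) → ℝ defined by y(x) = (e^{20x^{9/10}/(9A)} − 1)/(e^{20x^{9/10}/(9A)} + 1) satisfies y(0) = 0 and, for every x > 0, solves the Riccati fractional differential equation in the GFD sense of order α = 9/10: A·x^(1/10)·y′(x) + y(x)^2 = 1. -/
open Real

theorem HasDerivAt.tanh {f : ℝ → ℝ} {f' x : ℝ} (hf : HasDerivAt f f' x) :
    HasDerivAt (fun y => tanh (f y)) ((1 - tanh (f x) ^ 2) * f') x :=
  (hasDerivAt_tanh (f x)).comp x hf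

theorem Real.tanh_half_eq (t : ℝ) : tanh (t / 2) = (exp t - 1) / (exp t + 1) := by
  have hsq : exp (t / 2) * exp (t / 2) = exp t := by rw [← exp_add, add_halves]
  have hinv : exp (t / 2) * exp (-(t / 2)) = 1 := by rw [← exp_add, add_neg_cancel, exp_zero]
  rw [tanh_eq, ← mul_div_mul_left _ _ (exp_pos (t / 2)).ne', mul_sub, mul_add, hsq, hinv]

theorem gfd_riccati_tanh {A α : ℝ} (hA : A ≠ 0) (hα : α ≠ 0) {x : ℝ} (hx : 0 < x) :
    A * x ^ (1 - α) * deriv (fun x => tanh (x ^ α / (α * A))) x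
      + tanh (x ^ α / (α * A)) ^ 2 = 1 := by
  have hderiv := ((hasDerivAt_rpow_const (p := α) (Or.inl hx.ne')).div_const (α * A)).tanh
  have hpow : x ^ (1 - α) * x ^ (α - 1) = 1 := by
    rw [← rpow_add hx, sub_add_sub_cancel', sub_self, rpow_zero]
  rw [hderiv.deriv, mul_div_mul_left _ _ hα]
  generalize tanh (x ^ α / (α * A)) = t
  field_simp
  linear_combination (1 - t ^ 2) * hpow

/-- `y(x) = (e^{20x^{9/10}/(9A)} − 1)/(e^{20x^{9/10}/(9A)} + 1)`, with
`A = Γ(β)/Γ(β+1/10)`, satisfies `y 0 = 0` and solves the Riccati fractional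
differential equation in the GFD sense of order `9/10`:
`A·x^(1/10)·y′(x) + y(x)² = 1` for all `x > 0`. -/
theorem gfd_riccati_nine_tenths (β : ℝ) (hβ : 0 < β) (A : ℝ)
    (hA : A = Real.Gamma β / Real.Gamma (β + 1 / 10)) (y : ℝ → ℝ)
    (hy : ∀ x : ℝ, y x =
      (Real.exp (20 * x ^ ((9 : ℝ) / 10) / (9 * A)) - 1) /
      (Real.exp (20 * x ^ ((9 : ℝ) / 10) / (9 * A)) + 1)) :
    y 0 = 0 ∧
    ∀ x : ℝ, 0 < x → A * x ^ ((1 : ℝ) / 10) * deriv y x + (y x) ^ 2 = 1 := by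
  have hA0 : A ≠ 0 :=
    hA ▸ div_ne_zero (Gamma_pos_of_pos hβ).ne' (Gamma_pos_of_pos (by linarith)).ne'
  have hy_tanh : y = fun x => tanh (x ^ ((9 : ℝ) / 10) / (9 / 10 * A)) := by
    funext x
    rw [hy, ← tanh_half_eq]
    congr 1
    field_simp
    ring
  refine ⟨by simp [hy_tanh], fun x hx => ?_⟩
  rw [show (1 : ℝ) / 10 = 1 - 9 / 10 by norm_num, hy_tanh]
  exact gfd_riccati_tanh hA0 (by norm_num) hx
end

section
/- Let β > 0 and set A = Γ(β)/Γ(β+1/10). Define s(x) = 2·ln(1+√2) − (20√2/(9A))·x^(9/10) and y(x) = ((1+√2) − (√2−1)·e^{s(x)}) / (1 + e^{s(x)}) for x ≥ 0. Then y(0) = 0 and, for every x > 0, y solves the Riccati fractional differential equation in the GFD sense of order α = 9/10: A·x^(1/10)·y′(x) = 2·y(x) − y(x)^2 + 1. -/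
open Real

/-!
Both roots `1 ± √2` of `2y - y² + 1` are constant solutions, and between them the Riccati
equation `y' = (y - a)(y + b)/(a + b)` is solved by the Möbius image `(a - b eᵗ)/(1 + eᵗ)` of
`eᵗ`. Substituting `t = s(x) = c - k x^(9/10)` turns the GFD operator `A x^(1/10) d/dx` into
`-(9/10) k A d/dt`, and `k` is chosen so that this constant is `-(a + b) = -2√2`; the initial value
vanishes because `e^{s(0)} = (1 + √2)² = a / b`.
-/

theorem hasDerivAt_sub_mul_exp_div_one_add_exp (a b t : ℝ) (hab : a + b ≠ 0) :
    HasDerivAt (fun t => (a - b * exp t) / (1 + exp t))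
      (((a - b * exp t) / (1 + exp t) - a) * ((a - b * exp t) / (1 + exp t) + b) / (a + b)) t := by
  have hden : 1 + exp t ≠ 0 := by positivity
  refine ((((hasDerivAt_exp t).const_mul b).const_sub a).div
    ((hasDerivAt_exp t).const_add 1) hden).congr_deriv ?_
  field_simp
  ring

theorem rpow_one_sub_mul_deriv_comp_sub_mul_rpow {g : ℝ → ℝ} {g' c k p x : ℝ} (hx : 0 < x)
    (hg : HasDerivAt g g' (c - k * x ^ p)) :
    x ^ (1 - p) * deriv (fun x => g (c - k * x ^ p)) x = -(k * p) * g' := by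
  have hinner : HasDerivAt (fun x => c - k * x ^ p) (-(k * (p * x ^ (p - 1)))) x := by
    simpa using ((hasDerivAt_rpow_const (p := p) (Or.inl hx.ne')).const_mul k).const_sub c
  have hcomp := (hg.comp x hinner).deriv
  rw [Function.comp_def] at hcomp
  rw [hcomp]
  have hpow : x ^ (1 - p) * x ^ (p - 1) = 1 := by
    rw [← rpow_add hx]; simp
  linear_combination (-(k * p) * g') * hpow

/-- With `A = Γ(β)/Γ(β+1/10)`, `s(x) = 2·ln(1+√2) − (20√2/(9A))·x^(9/10)` and
`y(x) = ((1+√2) − (√2−1)·e^{s(x)})/(1 + e^{s(x)})`, one has `y 0 = 0` and `y` solves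
the Riccati fractional differential equation in the GFD sense of order `9/10`:
`A·x^(1/10)·y′(x) = 2·y(x) − y(x)² + 1` for all `x > 0`. -/
theorem gfd_riccati_nonhomogeneous (β : ℝ) (hβ : 0 < β) (A : ℝ)
    (hA : A = Real.Gamma β / Real.Gamma (β + 1 / 10)) (s y : ℝ → ℝ)
    (hs : ∀ x : ℝ, s x =
      2 * Real.log (1 + Real.sqrt 2) - 20 * Real.sqrt 2 / (9 * A) * x ^ ((9 : ℝ) / 10))
    (hy : ∀ x : ℝ, y x =
      ((1 + Real.sqrt 2) - (Real.sqrt 2 - 1) * Real.exp (s x)) / (1 + Real.exp (s x))) :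
    y 0 = 0 ∧
    ∀ x : ℝ, 0 < x → A * x ^ ((1 : ℝ) / 10) * deriv y x = 2 * y x - (y x) ^ 2 + 1 := by
  have hsqrt : √2 ^ 2 = 2 := sq_sqrt (by norm_num)
  have hsqrt_pos : 0 < √2 := by positivity
  have hA_pos : 0 < A := hA ▸ div_pos (Gamma_pos_of_pos hβ) (Gamma_pos_of_pos (by linarith))
  constructor
  · have hexp : exp (s 0) = (1 + √2) ^ 2 := by
      rw [hs 0, zero_rpow (by norm_num), mul_zero, sub_zero, two_mul, exp_add,
        exp_log (by positivity), sq]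
    rw [hy 0, hexp, div_eq_zero_iff]
    left
    linear_combination (-(1 + √2)) * hsqrt
  · intro x hx
    have hy_comp : y = fun x => (fun t => ((1 + √2) - (√2 - 1) * exp t) / (1 + exp t))
        (2 * log (1 + √2) - 20 * √2 / (9 * A) * x ^ ((9 : ℝ) / 10)) :=
      funext fun x => by rw [hy x, hs x]
    have hderiv := rpow_one_sub_mul_deriv_comp_sub_mul_rpow hx
      (hasDerivAt_sub_mul_exp_div_one_add_exp (1 + √2) (√2 - 1)
        (2 * log (1 + √2) - 20 * √2 / (9 * A) * x ^ ((9 : ℝ) / 10)) (by linarith))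
    rw [← hy_comp, ← hs x, ← hy x, show (1 : ℝ) - 9 / 10 = 1 / 10 by norm_num] at hderiv
    have hroots : (y x - (1 + √2)) * (y x + (√2 - 1)) = -(2 * y x - y x ^ 2 + 1) := by
      linear_combination (-1 : ℝ) * hsqrt
    rw [hroots, show 1 + √2 + (√2 - 1) = 2 * √2 by ring] at hderiv
    rw [mul_assoc, hderiv]
    field_simp
    ring
end
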